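/- arXiv:1704.02595 — 2 statements merged into one kernel-verified Lean document; each statement's English description precedes it below -/
import Mathlib

section
/- Let G be a connected simple graph and suppose there exist a real number α ≥ 1 and constants C₁, C₂ > 0 such that C₁ r^α ≤ |B_r(G,x)| ≤ C₂ r^α for every vertex x of G and every integer r ≥ 1. Then G has Property A. -/
/-!
Take for `v` the tent `u ↦ max (R - d(v, u)) 0` with `R = 2S`. It is at least `S` on `B_S(v)`,
so its squared ℓ²-norm is at least `S² |B_S(v)| ≥ C₁ S^(α+2)`. Tents at vertices with
`d(v, w) ≤ n` differ pointwise by at most `n`, and only on `B_(2S+n)(v)`, so the squared norm of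
their difference is at most `n² C₂ (3S)^α`. The normalized tents therefore differ by `O(n / S)`,
which is below `1 / n` once `S` is of order `n²`.
-/

/-- The `r`-ball around `v` in a simple graph. -/
def gball {V : Type*} (G : SimpleGraph V) (r : ℕ) (v : V) : Set V :=
  {u : V | G.Reachable v u ∧ G.dist v u ≤ r}

/-- Property A for a graph: for every `n ≥ 1` there are `Rₙ` and unit vectors
`ξⁿ_v ∈ ℓ²(V;ℝ)` supported in `B_{Rₙ}(v)` with `‖ξⁿ_x − ξⁿ_y‖ ≤ 1/n` whenever
`d_G(x,y) ≤ n`. -/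
def HasPropertyA {V : Type*} (G : SimpleGraph V) : Prop :=
  ∀ n : ℕ, 1 ≤ n → ∃ (R : ℕ) (ξ : V → lp (fun _ : V => ℝ) 2),
    (∀ v : V, ‖ξ v‖ = 1) ∧
    (∀ v u : V, (ξ v : V → ℝ) u ≠ 0 → u ∈ gball G R v) ∧
    (∀ v w : V, G.Reachable v w → G.dist v w ≤ n → ‖ξ v - ξ w‖ ≤ 1 / (n : ℝ))

theorem norm_mul_norm_inv_smul_sub_le {E : Type*} [NormedAddCommGroup E] [NormedSpace ℝ E]
    (a b : E) : ‖a‖ * ‖‖a‖⁻¹ • a - ‖b‖⁻¹ • b‖ ≤ 2 * ‖a - b‖ := by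
  rcases eq_or_ne a 0 with rfl | ha
  · simp
  have hrescale : ‖a‖ • (‖a‖⁻¹ • a - ‖b‖⁻¹ • b) = (a - b) + (1 - ‖a‖ * ‖b‖⁻¹) • b := by
    rw [smul_sub, smul_smul, smul_smul, mul_inv_cancel₀ (norm_ne_zero_iff.2 ha), one_smul,
      sub_smul, one_smul]
    abel
  have hcorr : ‖(1 - ‖a‖ * ‖b‖⁻¹) • b‖ ≤ ‖a - b‖ := by
    rcases eq_or_ne b 0 with rfl | hb
    · simp
    calc ‖(1 - ‖a‖ * ‖b‖⁻¹) • b‖ = |‖b‖ - ‖a‖| := by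
          have hb' : ‖b‖ ≠ 0 := norm_ne_zero_iff.2 hb
          have hscale : (1 - ‖a‖ * ‖b‖⁻¹) * ‖b‖ = ‖b‖ - ‖a‖ := by field_simp
          rw [norm_smul, Real.norm_eq_abs, ← hscale, abs_mul, abs_norm]
      _ ≤ ‖a - b‖ := norm_sub_rev a b ▸ abs_norm_sub_norm_le b a
  calc ‖a‖ * ‖‖a‖⁻¹ • a - ‖b‖⁻¹ • b‖ = ‖(a - b) + (1 - ‖a‖ * ‖b‖⁻¹) • b‖ := by
        rw [← hrescale, norm_smul, norm_norm]
    _ ≤ ‖a - b‖ + ‖a - b‖ := (norm_add_le _ _).trans (add_le_add_right hcorr _)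
    _ = 2 * ‖a - b‖ := by ring

theorem hasPropertyA_of_unnormalized {V : Type*} {G : SimpleGraph V}
    (h : ∀ n : ℕ, 1 ≤ n → ∃ (R : ℕ) (F : V → lp (fun _ : V => ℝ) 2),
      (∀ v, F v ≠ 0) ∧
      (∀ v u, (F v : V → ℝ) u ≠ 0 → u ∈ gball G R v) ∧
      (∀ v w, G.Reachable v w → G.dist v w ≤ n → 2 * n * ‖F v - F w‖ ≤ ‖F v‖)) :
    HasPropertyA G := by
  intro n hn
  obtain ⟨R, F, hF0, hFsupp, hFinv⟩ := h n hn
  have hFpos : ∀ v, 0 < ‖F v‖ := fun v => norm_pos_iff.2 (hF0 v)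
  refine ⟨R, fun v => ‖F v‖⁻¹ • F v, fun v => ?_, fun v u hu => hFsupp v u ?_, fun v w hvw hd => ?_⟩
  · rw [norm_smul, norm_inv, norm_norm, inv_mul_cancel₀ (hFpos v).ne']
  · rw [lp.coeFn_smul, Pi.smul_apply] at hu
    exact right_ne_zero_of_smul hu
  · have hn' : (0 : ℝ) < n := by exact_mod_cast hn
    rw [le_div_iff₀ hn', ← mul_le_mul_iff_right₀ (hFpos v)]
    calc ‖F v‖ * (‖‖F v‖⁻¹ • F v - ‖F w‖⁻¹ • F w‖ * n)
        = n * (‖F v‖ * ‖‖F v‖⁻¹ • F v - ‖F w‖⁻¹ • F w‖) := by ring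
      _ ≤ n * (2 * ‖F v - F w‖) :=
          mul_le_mul_of_nonneg_left (norm_mul_norm_inv_smul_sub_le _ _) n.cast_nonneg
      _ ≤ ‖F v‖ * 1 := by linarith [hFinv v w hvw hd]

namespace lp

variable {ι : Type*} {E : ι → Type*} [∀ i, NormedAddCommGroup (E i)]

theorem sum_norm_sq_le_norm_sq (g : lp E 2) (s : Finset ι) : ∑ i ∈ s, ‖g i‖ ^ 2 ≤ ‖g‖ ^ 2 := by
  simpa using sum_rpow_le_norm_rpow (p := 2) (by norm_num) g s

theorem norm_sq_eq_tsum (g : lp E 2) : ‖g‖ ^ 2 = ∑' i, ‖g i‖ ^ 2 := by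
  simpa using norm_rpow_eq_tsum (p := 2) (by norm_num) g

theorem card_mul_sq_le_norm_sq (g : lp E 2) (s : Finset ι) {a : ℝ} (ha : 0 ≤ a)
    (hg : ∀ i ∈ s, a ≤ ‖g i‖) : s.card * a ^ 2 ≤ ‖g‖ ^ 2 :=
  calc s.card * a ^ 2 = ∑ _i ∈ s, a ^ 2 := by rw [Finset.sum_const, nsmul_eq_mul]
    _ ≤ ∑ i ∈ s, ‖g i‖ ^ 2 := Finset.sum_le_sum fun i hi => pow_le_pow_left₀ ha (hg i hi) 2
    _ ≤ ‖g‖ ^ 2 := sum_norm_sq_le_norm_sq g s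

theorem norm_sq_le_card_mul_sq (g : lp E 2) (s : Finset ι) {b : ℝ}
    (hs : ∀ i ∉ s, g i = 0) (hg : ∀ i, ‖g i‖ ≤ b) : ‖g‖ ^ 2 ≤ s.card * b ^ 2 :=
  calc ‖g‖ ^ 2 = ∑ i ∈ s, ‖g i‖ ^ 2 := by
        rw [norm_sq_eq_tsum, tsum_eq_sum fun i hi => by simp [hs i hi]]
    _ ≤ ∑ _i ∈ s, b ^ 2 := Finset.sum_le_sum fun i _ => pow_le_pow_left₀ (norm_nonneg _) (hg i) 2
    _ = s.card * b ^ 2 := by rw [Finset.sum_const, nsmul_eq_mul]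

end lp

namespace SimpleGraph

variable {V : Type*} {G : SimpleGraph V}

theorem gball_mono {r s : ℕ} (h : r ≤ s) (v : V) : gball G r v ⊆ gball G s v :=
  fun _ hu => ⟨hu.1, hu.2.trans h⟩

variable (G) in
noncomputable def tent (R : ℕ) (v u : V) : ℝ := max ((R : ℝ) - G.dist v u) 0

theorem tent_eq_zero_of_le {R : ℕ} {v u : V} (h : R ≤ G.dist v u) : G.tent R v u = 0 :=
  max_eq_right (sub_nonpos.2 (by exact_mod_cast h))

theorem sub_dist_le_tent (R : ℕ) (v u : V) : (R : ℝ) - G.dist v u ≤ G.tent R v u :=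
  le_max_left _ _

@[simp]
theorem tent_self (R : ℕ) (v : V) : G.tent R v v = R := by
  simp [tent]

theorem tent_nonneg (R : ℕ) (v u : V) : 0 ≤ G.tent R v u :=
  le_max_right _ _

theorem Connected.mem_gball_of_tent_ne_zero (hG : G.Connected) {R : ℕ} {v u : V}
    (h : G.tent R v u ≠ 0) : u ∈ gball G R v :=
  ⟨hG v u, (not_le.1 (mt tent_eq_zero_of_le h)).le⟩

theorem Connected.abs_tent_sub_tent_le (hG : G.Connected) (R : ℕ) (v w u : V) :
    |G.tent R v u - G.tent R w u| ≤ G.dist v w := by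
  refine (abs_max_sub_max_le_abs _ _ _).trans ?_
  have hvu : G.dist v u ≤ G.dist v w + G.dist w u := hG.dist_triangle
  have hwu : G.dist w u ≤ G.dist v w + G.dist v u := G.dist_comm (u := v) ▸ hG.dist_triangle
  rw [sub_sub_sub_cancel_left, abs_sub_le_iff, sub_le_iff_le_add, sub_le_iff_le_add]
  exact ⟨by exact_mod_cast hwu, by exact_mod_cast hvu⟩

theorem Connected.memℓp_tent (hG : G.Connected) {R : ℕ} {v : V} (hfin : (gball G R v).Finite) :
    Memℓp (G.tent R v) 2 :=
  (memℓp_zero (hfin.subset fun _ => hG.mem_gball_of_tent_ne_zero)).of_exponent_ge zero_le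

variable (hG : G.Connected) {R : ℕ} (hfin : ∀ v, (gball G R v).Finite)

noncomputable def tentLp (v : V) : lp (fun _ : V => ℝ) 2 :=
  ⟨G.tent R v, hG.memℓp_tent (hfin v)⟩

@[simp]
theorem coe_tentLp (v : V) : ⇑(tentLp hG hfin v) = G.tent R v := rfl

theorem sq_mul_ncard_gball_le_norm_tentLp_sq {S : ℕ} (hR : 2 * S ≤ R) (v : V) :
    (gball G S v).ncard * (S : ℝ) ^ 2 ≤ ‖tentLp hG hfin v‖ ^ 2 := by
  have hS : (gball G S v).Finite := (hfin v).subset (gball_mono (by omega) v)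
  rw [Set.ncard_eq_toFinset_card _ hS]
  refine lp.card_mul_sq_le_norm_sq _ _ S.cast_nonneg fun u hu => ?_
  have hdist : (G.dist v u : ℝ) ≤ S := by exact_mod_cast (hS.mem_toFinset.1 hu).2
  have hR' : 2 * (S : ℝ) ≤ R := by exact_mod_cast hR
  rw [coe_tentLp, Real.norm_of_nonneg (tent_nonneg R v u)]
  linarith [sub_dist_le_tent (G := G) R v u]

theorem norm_tentLp_sub_sq_le {n : ℕ} {v w : V} (hQ : (gball G (R + n) v).Finite)
    (hvw : G.dist v w ≤ n) :
    ‖tentLp hG hfin v - tentLp hG hfin w‖ ^ 2 ≤ (gball G (R + n) v).ncard * (n : ℝ) ^ 2 := by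
  rw [Set.ncard_eq_toFinset_card _ hQ]
  refine lp.norm_sq_le_card_mul_sq _ _ (fun u hu => ?_) fun u => ?_
  · have hfar : R + n < G.dist v u := by
      by_contra! h
      exact hu (hQ.mem_toFinset.2 ⟨hG v u, h⟩)
    have hwu : G.dist v u ≤ G.dist v w + G.dist w u := hG.dist_triangle
    rw [lp.coeFn_sub, Pi.sub_apply, coe_tentLp, coe_tentLp, tent_eq_zero_of_le (by omega),
      tent_eq_zero_of_le (by omega), sub_zero]
  · rw [lp.coeFn_sub, Pi.sub_apply, coe_tentLp, coe_tentLp, Real.norm_eq_abs]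
    exact (hG.abs_tent_sub_tent_le R v w u).trans (by exact_mod_cast hvw)

theorem tentLp_ne_zero (hR : 0 < R) (v : V) : tentLp hG hfin v ≠ 0 := fun h => by
  have := congrFun (congrArg (⇑) h) v
  rw [coe_tentLp, tent_self, lp.coeFn_zero, Pi.zero_apply, Nat.cast_eq_zero] at this
  omega

theorem two_mul_norm_tentLp_sub_le {S n : ℕ} (hR : R = 2 * S) {v w : V}
    (hQ : (gball G (R + n) v).Finite) (hvw : G.dist v w ≤ n)
    (hvol : 4 * (n : ℝ) ^ 4 * (gball G (R + n) v).ncard ≤ (S : ℝ) ^ 2 * (gball G S v).ncard) :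
    2 * n * ‖tentLp hG hfin v - tentLp hG hfin w‖ ≤ ‖tentLp hG hfin v‖ := by
  refine (pow_le_pow_iff_left₀ (by positivity) (norm_nonneg _) two_ne_zero).1 ?_
  calc (2 * n * ‖tentLp hG hfin v - tentLp hG hfin w‖) ^ 2
      = 4 * n ^ 2 * ‖tentLp hG hfin v - tentLp hG hfin w‖ ^ 2 := by ring
    _ ≤ 4 * n ^ 2 * ((gball G (R + n) v).ncard * (n : ℝ) ^ 2) := by
      gcongr; exact norm_tentLp_sub_sq_le hG hfin hQ hvw
    _ = 4 * (n : ℝ) ^ 4 * (gball G (R + n) v).ncard := by ring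
    _ ≤ (S : ℝ) ^ 2 * (gball G S v).ncard := hvol
    _ ≤ ‖tentLp hG hfin v‖ ^ 2 := by
      rw [mul_comm]; exact sq_mul_ncard_gball_le_norm_tentLp_sq hG hfin hR.ge v

end SimpleGraph

theorem exists_nat_ge_and_le_mul_sq (n : ℕ) (K : ℝ) {c : ℝ} (hc : 0 < c) :
    ∃ S : ℕ, n ≤ S ∧ K ≤ c * S ^ 2 := by
  obtain ⟨S, hS⟩ := exists_nat_ge (max (n : ℝ) (K / c))
  have hSS : (S : ℝ) ≤ (S : ℝ) ^ 2 := by exact_mod_cast Nat.le_self_pow two_ne_zero S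
  refine ⟨S, by exact_mod_cast (le_max_left _ _).trans hS, ?_⟩
  rw [← div_le_iff₀' hc]
  exact (le_max_right _ _).trans (hS.trans hSS)

/-- a connected graph of uniformly polynomial growth
(`C₁ rᵅ ≤ |B_r(x)| ≤ C₂ rᵅ` for all vertices `x` and `r ≥ 1`) has Property A. -/
theorem propertyA_of_polynomial_growth
    {V : Type*} (G : SimpleGraph V) (hconn : G.Connected)
    (α : ℝ) (hα : 1 ≤ α) (C₁ C₂ : ℝ) (hC₁ : 0 < C₁) (hC₂ : 0 < C₂)
    (hgrowth : ∀ (x : V) (r : ℕ), 1 ≤ r →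
      (gball G r x).Finite ∧
      C₁ * (r : ℝ) ^ α ≤ ((gball G r x).ncard : ℝ) ∧
      ((gball G r x).ncard : ℝ) ≤ C₂ * (r : ℝ) ^ α) :
    HasPropertyA G := by
  refine hasPropertyA_of_unnormalized fun n hn => ?_
  obtain ⟨S, hnS, hS⟩ := exists_nat_ge_and_le_mul_sq n (4 * n ^ 4 * C₂ * 3 ^ α) hC₁
  have hfin : ∀ v, (gball G (2 * S) v).Finite := fun v => (hgrowth v _ (by omega)).1
  refine ⟨2 * S, SimpleGraph.tentLp hconn hfin, SimpleGraph.tentLp_ne_zero hconn hfin (by omega),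
    fun v u => hconn.mem_gball_of_tent_ne_zero, fun v w _ hvw =>
      SimpleGraph.two_mul_norm_tentLp_sub_le hconn hfin rfl (hgrowth v _ (by omega)).1 hvw ?_⟩
  have hQ : ((2 * S + n : ℕ) : ℝ) ^ α ≤ 3 ^ α * (S : ℝ) ^ α := by
    rw [← Real.mul_rpow (by norm_num) S.cast_nonneg]
    exact Real.rpow_le_rpow (by positivity) (by exact_mod_cast (by omega : 2 * S + n ≤ 3 * S))
      (by linarith)
  calc 4 * (n : ℝ) ^ 4 * (gball G (2 * S + n) v).ncard
      ≤ 4 * n ^ 4 * (C₂ * (3 ^ α * (S : ℝ) ^ α)) := by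
        gcongr
        exact (hgrowth v _ (by omega)).2.2.trans (by gcongr)
    _ = 4 * n ^ 4 * C₂ * 3 ^ α * (S : ℝ) ^ α := by ring
    _ ≤ C₁ * S ^ 2 * (S : ℝ) ^ α := by gcongr
    _ = S ^ 2 * (C₁ * (S : ℝ) ^ α) := by ring
    _ ≤ S ^ 2 * (gball G S v).ncard := by gcongr; exact (hgrowth v S (by omega)).2.1
end

section
/- Let Γ be a finitely generated group with finite symmetric generating set Q, Z a uniformly recurrent subgroup of Γ, H ∈ Z, and r ≥ 1. Define p ≡_r q for p, q ∈ Γ/H if the rooted-labeled r-balls around p and q are isomorphic. Then ≡_r is an equivalence relation with finitely many equivalence classes, and there exists t_r > 0 such that for every p ∈ Γ/H the ball B_{t_r}(p) intersects every ≡_r-equivalence class. -/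
/-- Conjugation action of a group on its subgroups: `g • H = gHg⁻¹`. -/
def conjSub {Γ : Type*} [Group Γ] (g : Γ) (H : Subgroup Γ) : Subgroup Γ :=
  Subgroup.map (MulAut.conj g).toMonoidHom H

/-- The Chabauty-type topology on `Sub(Γ)`: the topology induced from the product
topology on `{0,1}^Γ` via `H ↦ (γ ↦ decide (γ ∈ H))`. -/
noncomputable instance chabauty {Γ : Type*} [Group Γ] : TopologicalSpace (Subgroup Γ) :=
  TopologicalSpace.induced
    (fun H (g : Γ) => @decide (g ∈ H) (Classical.dec _)) inferInstance

/-- A uniformly recurrent subgroup: a nonempty, closed, conjugation-invariant subset of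
`Sub(Γ)` on which every conjugation orbit is dense. -/
structure IsURS {Γ : Type*} [Group Γ] (Z : Set (Subgroup Γ)) : Prop where
  nonempty : Z.Nonempty
  closed : IsClosed Z
  invariant : ∀ g : Γ, ∀ H ∈ Z, conjSub g H ∈ Z
  minimal : ∀ H ∈ Z, ∀ K ∈ Z, K ∈ closure {L : Subgroup Γ | ∃ g : Γ, conjSub g H = L}

/-- The Schreier graph of a subgroup `H ≤ Γ` with respect to a generating set `Q`:
vertices are left cosets in `Γ/H`, and `x ~ y` iff some `s ∈ Q` moves one to the other. -/
def schreierGraph {Γ : Type*} [Group Γ] (Q : Finset Γ) (H : Subgroup Γ) :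
    SimpleGraph (Γ ⧸ H) where
  Adj x y := x ≠ y ∧ ∃ s ∈ Q, s • x = y ∨ s • y = x
  symm := by
    constructor; rintro x y ⟨hne, s, hs, h⟩
    exact ⟨hne.symm, s, hs, h.symm⟩
  loopless := by constructor; rintro x ⟨hne, _⟩; exact hne rfl

/-- The `R`-ball around `x` in the Schreier graph of `H`. -/
def sBall {Γ : Type*} [Group Γ] (Q : Finset Γ) (H : Subgroup Γ) (R : ℕ) (x : Γ ⧸ H) :
    Set (Γ ⧸ H) :=
  {y | (schreierGraph Q H).Reachable x y ∧ (schreierGraph Q H).dist x y ≤ R}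

/-- The rooted-labeled `R`-balls around `x ∈ Γ/H` and `y ∈ Γ/H'` are isomorphic:
there is a root-preserving bijection between them commuting with all generator labels. -/
def BallIso {Γ : Type*} [Group Γ] (Q : Finset Γ) (H H' : Subgroup Γ) (R : ℕ)
    (x : Γ ⧸ H) (y : Γ ⧸ H') : Prop :=
  ∃ φ : (Γ ⧸ H) → (Γ ⧸ H'),
    Set.BijOn φ (sBall Q H R x) (sBall Q H' R y) ∧ φ x = y ∧
    ∀ s ∈ Q, ∀ u ∈ sBall Q H R x, ∀ v ∈ sBall Q H R x, (s • u = v ↔ s • φ u = φ v)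

/-!
The isomorphism type of the rooted labeled `r`-ball at `p` is determined by the *pattern* of `p`:
the pairs of words of length at most `r + 1` in `Q` that send `p` to the same coset. There are
finitely many patterns, hence finitely many classes. For `p = gH` the pattern only depends on which
elements of the finite window `{u⁻¹v : |u|, |v| ≤ r + 1}` lie in `gHg⁻¹`, an open condition in
`Sub(Γ)`. By minimality every conjugation orbit in `Z` enters this open set, and by compactness of
`Z` finitely many conjugators `F` suffice; so every pattern recurs within distance `max_{f ∈ F} |f|`
of every point.
-/

section Conjugation
variable {Γ : Type*} [Group Γ]

theorem mem_conjSub {g x : Γ} {H : Subgroup Γ} : x ∈ conjSub g H ↔ g⁻¹ * x * g ∈ H := by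
  rw [conjSub, Subgroup.mem_map_equiv, MulAut.conj_symm_apply]

theorem conjSub_mul (a b : Γ) (H : Subgroup Γ) :
    conjSub (a * b) H = conjSub a (conjSub b H) := by
  ext x
  simp only [mem_conjSub, mul_inv_rev, mul_assoc]

theorem smul_mk_eq_smul_mk_iff {H : Subgroup Γ} (a b g : Γ) :
    a • (QuotientGroup.mk g : Γ ⧸ H) = b • QuotientGroup.mk g ↔ a⁻¹ * b ∈ conjSub g H := by
  rw [MulAction.Quotient.smul_mk, MulAction.Quotient.smul_mk, QuotientGroup.eq, mem_conjSub,
    smul_eq_mul, smul_eq_mul]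
  group

end Conjugation

section Chabauty
variable {Γ : Type*} [Group Γ]

variable (Γ) in
/-- The map `H ↦ 1_H` inducing the topology `chabauty`. -/
noncomputable def subgroupIndicator : Subgroup Γ → Γ → Bool :=
  fun H g => @decide (g ∈ H) (Classical.dec _)

theorem subgroupIndicator_eq_true {H : Subgroup Γ} {g : Γ} :
    subgroupIndicator Γ H g = true ↔ g ∈ H := by
  simp [subgroupIndicator]

theorem isClosedEmbedding_subgroupIndicator :
    Topology.IsClosedEmbedding (subgroupIndicator Γ) := by
  refine ⟨⟨⟨rfl⟩, fun H K h => ?_⟩, ?_⟩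
  · ext g
    rw [← subgroupIndicator_eq_true, h, subgroupIndicator_eq_true]
  have hrange : Set.range (subgroupIndicator Γ) =
      {χ | χ 1 = true} ∩ ⋂ (a : Γ) (b : Γ), {χ | χ a = true → χ b = true → χ (a * b⁻¹) = true} := by
    ext χ
    simp only [Set.mem_range, Set.mem_inter_iff, Set.mem_ofPred_eq, Set.mem_iInter]
    constructor
    · rintro ⟨H, rfl⟩
      simp only [subgroupIndicator_eq_true]
      exact ⟨H.one_mem, fun a b ha hb => H.mul_mem ha (H.inv_mem hb)⟩
    · rintro ⟨h1, hdiv⟩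
      refine ⟨Subgroup.ofDiv {g | χ g = true} ⟨1, h1⟩ fun a ha b hb => hdiv a b ha hb, ?_⟩
      funext g
      cases hg : χ g <;> simp [subgroupIndicator, Subgroup.ofDiv, hg]
  rw [hrange]
  refine (isClosed_eq (continuous_apply 1) continuous_const).inter
    (isClosed_iInter fun a => isClosed_iInter fun b => ?_)
  exact IsClosed.preimage (f := fun χ : Γ → Bool => (χ a, χ b, χ (a * b⁻¹))) (by fun_prop)
    (isClosed_discrete {x | x.1 = true → x.2.1 = true → x.2.2 = true})

instance : CompactSpace (Subgroup Γ) :=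
  isClosedEmbedding_subgroupIndicator.compactSpace

theorem continuous_subgroupIndicator_apply (g : Γ) :
    Continuous fun H : Subgroup Γ => subgroupIndicator Γ H g :=
  (continuous_apply g).comp (continuous_induced_dom (f := subgroupIndicator Γ))

theorem isOpen_setOf_forall_mem_iff {S : Set Γ} (hS : S.Finite) (K₀ : Subgroup Γ) :
    IsOpen {K : Subgroup Γ | ∀ g ∈ S, g ∈ K ↔ g ∈ K₀} := by
  classical
  simp only [Set.ofPred_forall]
  refine hS.isOpen_biInter fun g _ => ?_
  convert (continuous_subgroupIndicator_apply g).isOpen_preimage _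
    (isOpen_discrete {decide (g ∈ K₀)}) using 1
  ext K
  simp [subgroupIndicator]

theorem continuous_conjSub (g : Γ) : Continuous (conjSub g : Subgroup Γ → Subgroup Γ) := by
  refine continuous_induced_rng.2 (continuous_pi fun x => ?_)
  convert continuous_subgroupIndicator_apply (g⁻¹ * x * g) using 2 with H
  simp only [Function.comp_apply, subgroupIndicator, decide_eq_decide, mem_conjSub]

theorem IsURS.exists_finset_conjSub_mem {Z : Set (Subgroup Γ)} (hZ : IsURS Z)
    {U : Set (Subgroup Γ)} (hU : IsOpen U) {K₀ : Subgroup Γ} (hK₀ : K₀ ∈ Z) (hK₀U : K₀ ∈ U) :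
    ∃ F : Finset Γ, ∀ K ∈ Z, ∃ g ∈ F, conjSub g K ∈ U := by
  have hcover : Z ⊆ ⋃ g, conjSub g ⁻¹' U := fun K hK => by
    obtain ⟨_, hL, g, rfl⟩ := mem_closure_iff.mp (hZ.minimal K hK K₀ hK₀) U hU hK₀U
    exact Set.mem_iUnion.2 ⟨g, hL⟩
  obtain ⟨F, hF⟩ := hZ.closed.isCompact.elim_finite_subcover _
    (fun g => hU.preimage (continuous_conjSub g)) hcover
  exact ⟨F, fun K hK => by simpa using hF hK⟩

end Chabauty

namespace Schreier

section Words
variable {α : Type*}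

def words (Q : Finset α) (n : ℕ) : Set (List α) := {l | l.length ≤ n ∧ ∀ s ∈ l, s ∈ Q}

theorem finite_words (Q : Finset α) (n : ℕ) : (words Q n).Finite := by
  refine ((List.finite_length_le Q n).image (List.map Subtype.val)).subset ?_
  rintro l ⟨hlen, hQ⟩
  exact ⟨l.attach.map fun s => ⟨s.1, hQ s.1 s.2⟩, by simpa using hlen, by simp⟩

theorem words_mono {Q : Finset α} {m n : ℕ} (h : m ≤ n) : words Q m ⊆ words Q n :=
  fun _ hl => ⟨hl.1.trans h, hl.2⟩

theorem nil_mem_words (Q : Finset α) (n : ℕ) : ([] : List α) ∈ words Q n := by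
  simp [words]

theorem cons_mem_words {Q : Finset α} {n : ℕ} {s : α} {l : List α} (hs : s ∈ Q)
    (hl : l ∈ words Q n) : s :: l ∈ words Q (n + 1) :=
  ⟨by simpa using hl.1, by simpa [hs] using hl.2⟩

end Words

variable {Γ : Type*} [Group Γ]

theorem exists_mem_words_prod_eq {Q : Finset Γ} (hgen : Subgroup.closure (Q : Set Γ) = ⊤)
    (hsym : ∀ s ∈ Q, s⁻¹ ∈ Q) (g : Γ) : ∃ n, ∃ l ∈ words Q n, l.prod = g := by
  have hg : g ∈ Submonoid.closure ((Q : Set Γ) ∪ (Q : Set Γ)⁻¹) := by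
    rw [← Subgroup.closure_toSubmonoid, hgen]
    exact Subgroup.mem_top g
  obtain ⟨l, hl, rfl⟩ := Submonoid.exists_list_of_mem_closure hg
  refine ⟨l.length, l, ⟨le_rfl, fun s hs => ?_⟩, rfl⟩
  rcases hl s hs with h | h
  · exact h
  · simpa using hsym s⁻¹ h

section Balls
variable {Q : Finset Γ} {H : Subgroup Γ}

theorem exists_smul_eq_of_adj (hsym : ∀ s ∈ Q, s⁻¹ ∈ Q) {x y : Γ ⧸ H}
    (h : (schreierGraph Q H).Adj x y) : ∃ s ∈ Q, s • x = y := by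
  obtain ⟨-, s, hs, h | h⟩ := h
  · exact ⟨s, hs, h⟩
  · exact ⟨s⁻¹, hsym s hs, by rw [← h, inv_smul_smul]⟩

-- Read from the end of the walk back to its start, so that the induction prepends letters.
theorem exists_mem_words_smul_eq_of_walk (hsym : ∀ s ∈ Q, s⁻¹ ∈ Q) {x y : Γ ⧸ H}
    (w : (schreierGraph Q H).Walk x y) : ∃ l ∈ words Q w.length, l.prod • y = x := by
  induction w with
  | nil => exact ⟨[], nil_mem_words Q 0, by simp⟩
  | cons hadj w ih =>
    obtain ⟨l, hl, hly⟩ := ih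
    obtain ⟨s, hs, hsx⟩ := exists_smul_eq_of_adj hsym hadj.symm
    exact ⟨s :: l, cons_mem_words hs hl, by rw [List.prod_cons, mul_smul, hly, hsx]⟩

theorem exists_walk_length_le_of_forall_mem (x : Γ ⧸ H) {l : List Γ} (hl : ∀ s ∈ l, s ∈ Q) :
    ∃ w : (schreierGraph Q H).Walk x (l.prod • x), w.length ≤ l.length := by
  induction l with
  | nil =>
    rw [List.prod_nil, one_smul]
    exact ⟨.nil, le_rfl⟩
  | cons s l ih =>
    obtain ⟨w, hw⟩ := ih fun t ht => hl t (List.mem_cons_of_mem s ht)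
    rw [List.prod_cons, mul_smul]
    by_cases hfix : s • l.prod • x = l.prod • x
    · refine ⟨w.copy rfl hfix.symm, ?_⟩
      simp only [SimpleGraph.Walk.length_copy, List.length_cons]
      omega
    · have hadj : (schreierGraph Q H).Adj (l.prod • x) (s • l.prod • x) :=
        ⟨Ne.symm hfix, s, hl s List.mem_cons_self, Or.inl rfl⟩
      refine ⟨w.concat hadj, ?_⟩
      simp only [SimpleGraph.Walk.length_concat, List.length_cons]
      omega

theorem mem_sBall_iff (hsym : ∀ s ∈ Q, s⁻¹ ∈ Q) {R : ℕ} {x y : Γ ⧸ H} :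
    y ∈ sBall Q H R x ↔ ∃ l ∈ words Q R, l.prod • x = y := by
  constructor
  · rintro ⟨hreach, hdist⟩
    obtain ⟨w, hw⟩ := hreach.symm.exists_walk_length_eq_dist
    obtain ⟨l, hl, hlx⟩ := exists_mem_words_smul_eq_of_walk hsym w
    rw [SimpleGraph.dist_comm] at hw
    exact ⟨l, words_mono (hw ▸ hdist) hl, hlx⟩
  · rintro ⟨l, hl, rfl⟩
    obtain ⟨w, hw⟩ := exists_walk_length_le_of_forall_mem x hl.2
    exact ⟨⟨w⟩, (SimpleGraph.dist_le w).trans (hw.trans hl.1)⟩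

theorem self_mem_sBall {R : ℕ} (x : Γ ⧸ H) : x ∈ sBall Q H R x :=
  ⟨.refl x, by simp⟩

theorem sBall_mono {R R' : ℕ} (h : R ≤ R') (x : Γ ⧸ H) : sBall Q H R x ⊆ sBall Q H R' x :=
  fun _ hy => ⟨hy.1, hy.2.trans h⟩

end Balls

section BallIso
variable {Q : Finset Γ} {R : ℕ}

theorem ballIso_refl {H : Subgroup Γ} (x : Γ ⧸ H) : BallIso Q H H R x x :=
  ⟨id, Set.bijOn_id _, rfl, fun _ _ _ _ _ _ => Iff.rfl⟩

theorem ballIso_symm {H H' : Subgroup Γ} {x : Γ ⧸ H} {y : Γ ⧸ H'}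
    (h : BallIso Q H H' R x y) : BallIso Q H' H R y x := by
  obtain ⟨φ, hφ, hroot, hlabel⟩ := h
  have hinv := hφ.invOn_invFunOn
  have hψ := hφ.symm hinv.symm
  refine ⟨Function.invFunOn φ (sBall Q H R x), hψ, ?_, fun s hs u hu v hv => ?_⟩
  · rw [← hroot]
    exact hinv.1 (self_mem_sBall x)
  · rw [hlabel s hs _ (hψ.mapsTo hu) _ (hψ.mapsTo hv), hinv.2 hu, hinv.2 hv]

theorem ballIso_trans {H H' H'' : Subgroup Γ} {x : Γ ⧸ H} {y : Γ ⧸ H'} {z : Γ ⧸ H''}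
    (hxy : BallIso Q H H' R x y) (hyz : BallIso Q H' H'' R y z) : BallIso Q H H'' R x z := by
  obtain ⟨φ, hφ, hφx, hφl⟩ := hxy
  obtain ⟨ψ, hψ, hψy, hψl⟩ := hyz
  refine ⟨ψ ∘ φ, hψ.comp hφ, by simp [hφx, hψy], fun s hs u hu v hv => ?_⟩
  rw [hφl s hs u hu v hv, hψl s hs _ (hφ.mapsTo hu) _ (hφ.mapsTo hv), Function.comp_apply,
    Function.comp_apply]

end BallIso

/-- Words of length `r + 1` are needed to see the labeled edges leaving the `r`-ball. -/
def pattern (Q : Finset Γ) (r : ℕ) {H : Subgroup Γ} (p : Γ ⧸ H) : Set (List Γ × List Γ) :=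
  {x ∈ words Q (r + 1) ×ˢ words Q (r + 1) | x.1.prod • p = x.2.prod • p}

theorem finite_range_pattern (Q : Finset Γ) (r : ℕ) (H : Subgroup Γ) :
    (Set.range (pattern Q r (H := H))).Finite :=
  ((finite_words Q (r + 1)).prod (finite_words Q (r + 1))).finite_subsets.subset <|
    Set.range_subset_iff.2 fun _ => Set.sep_subset _ _

section Pattern
variable {Q : Finset Γ} {r : ℕ} {H H' : Subgroup Γ}

theorem smul_eq_smul_iff_of_pattern_eq {p : Γ ⧸ H} {q : Γ ⧸ H'}
    (hpq : pattern Q r p = pattern Q r q) {l₁ l₂ : List Γ} (h₁ : l₁ ∈ words Q (r + 1))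
    (h₂ : l₂ ∈ words Q (r + 1)) : l₁.prod • p = l₂.prod • p ↔ l₁.prod • q = l₂.prod • q := by
  simpa [pattern, h₁, h₂] using Set.ext_iff.1 hpq (l₁, l₂)

theorem ballIso_of_pattern_eq (hsym : ∀ s ∈ Q, s⁻¹ ∈ Q) {p : Γ ⧸ H} {q : Γ ⧸ H'}
    (hpq : pattern Q r p = pattern Q r q) : BallIso Q H H' r p q := by
  have hword : ∀ u ∈ sBall Q H r p, ∃ l ∈ words Q r, l.prod • p = u :=
    fun u hu => (mem_sBall_iff hsym).1 hu
  choose! w hw hwp using hword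
  have hr : ∀ {l}, l ∈ words Q r → l ∈ words Q (r + 1) := fun hl => words_mono r.le_succ hl
  -- `φ u` applies to `q` the word that leads from `p` to `u`; any other such word does as well
  have key : ∀ u ∈ sBall Q H r p, ∀ l ∈ words Q (r + 1),
      l.prod • p = u ↔ l.prod • q = (w u).prod • q := fun u hu l hl => by
    rw [← smul_eq_smul_iff_of_pattern_eq hpq hl (hr (hw u hu)), hwp u hu]
  refine ⟨fun u => (w u).prod • q, ⟨fun u hu => ?_, fun u hu v hv huv => ?_, fun v hv => ?_⟩,
    ?_, fun s hs u hu v hv => ?_⟩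
  · exact (mem_sBall_iff hsym).2 ⟨w u, hw u hu, rfl⟩
  · rw [← hwp u hu]
    exact (key v hv _ (hr (hw u hu))).2 huv
  · obtain ⟨l, hl, rfl⟩ := (mem_sBall_iff hsym).1 hv
    have hu : l.prod • p ∈ sBall Q H r p := (mem_sBall_iff hsym).2 ⟨l, hl, rfl⟩
    exact ⟨_, hu, ((key _ hu l (hr hl)).1 rfl).symm⟩
  · simpa [eq_comm] using (key p (self_mem_sBall p) [] (nil_mem_words Q _)).1 (by simp)
  · have := key v hv (s :: w u) (cons_mem_words hs (hw u hu))
    rwa [List.prod_cons, mul_smul, mul_smul, hwp u hu] at this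

end Pattern

theorem finite_ballIso_classes {Q : Finset Γ} (hsym : ∀ s ∈ Q, s⁻¹ ∈ Q) (H : Subgroup Γ) (r : ℕ) :
    {C : Set (Γ ⧸ H) | ∃ p, C = {q | BallIso Q H H r p q}}.Finite := by
  have := (finite_range_pattern Q r H).to_subtype
  refine (Set.finite_range fun σ : Set.range (pattern Q r (H := H)) =>
    {q | BallIso Q H H r (Set.rangeSplitting _ σ) q}).subset ?_
  rintro _ ⟨p, rfl⟩
  have hp := ballIso_of_pattern_eq hsym (Set.apply_rangeSplitting (pattern Q r) ⟨_, p, rfl⟩)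
  exact ⟨⟨_, p, rfl⟩, Set.ext fun q => ⟨ballIso_trans (ballIso_symm hp), ballIso_trans hp⟩⟩

theorem pattern_mk_eq_of_agree {Q : Finset Γ} {r : ℕ} {H : Subgroup Γ} {g g' : Γ}
    (h : ∀ γ ∈ Set.image2 (fun l₁ l₂ : List Γ => l₁.prod⁻¹ * l₂.prod) (words Q (r + 1))
      (words Q (r + 1)), γ ∈ conjSub g H ↔ γ ∈ conjSub g' H) :
    pattern Q r (QuotientGroup.mk g : Γ ⧸ H) = pattern Q r (QuotientGroup.mk g' : Γ ⧸ H) := by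
  ext ⟨l₁, l₂⟩
  simp only [pattern, Set.mem_prod, smul_mk_eq_smul_mk_iff]
  exact and_congr_right fun hl => h _ (Set.mem_image2_of_mem hl.1 hl.2)

theorem exists_pattern_eq_mem_sBall {Q : Finset Γ}
    (hgen : Subgroup.closure (Q : Set Γ) = ⊤) (hsym : ∀ s ∈ Q, s⁻¹ ∈ Q) {Z : Set (Subgroup Γ)}
    (hZ : IsURS Z) {H : Subgroup Γ} (hH : H ∈ Z) (r : ℕ) (q : Γ ⧸ H) :
    ∃ n, ∀ p : Γ ⧸ H, ∃ z ∈ sBall Q H n p, pattern Q r z = pattern Q r q := by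
  obtain ⟨g₀, rfl⟩ := QuotientGroup.mk_surjective q
  have hW := (finite_words Q (r + 1)).image2 (fun l₁ l₂ : List Γ => l₁.prod⁻¹ * l₂.prod)
    (finite_words Q (r + 1))
  obtain ⟨F, hF⟩ := hZ.exists_finset_conjSub_mem (isOpen_setOf_forall_mem_iff hW _)
    (hZ.invariant g₀ H hH) fun _ _ => Iff.rfl
  choose len l hl hlg using exists_mem_words_prod_eq hgen hsym
  refine ⟨F.sup len, fun p => ?_⟩
  obtain ⟨h, rfl⟩ := QuotientGroup.mk_surjective p
  obtain ⟨g, hgF, hg⟩ := hF _ (hZ.invariant h H hH)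
  refine ⟨(l g).prod • QuotientGroup.mk h, (mem_sBall_iff hsym).2 ⟨l g, ?_, rfl⟩, ?_⟩
  · exact words_mono (Finset.le_sup hgF) (hl g)
  · rw [MulAction.Quotient.smul_mk, smul_eq_mul, hlg]
    exact pattern_mk_eq_of_agree (by rwa [conjSub_mul])

theorem exists_forall_exists_pattern_eq_mem_sBall {Q : Finset Γ}
    (hgen : Subgroup.closure (Q : Set Γ) = ⊤) (hsym : ∀ s ∈ Q, s⁻¹ ∈ Q) {Z : Set (Subgroup Γ)}
    (hZ : IsURS Z) {H : Subgroup Γ} (hH : H ∈ Z) (r : ℕ) :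
    ∃ t, ∀ p q : Γ ⧸ H, ∃ z ∈ sBall Q H t p, pattern Q r z = pattern Q r q := by
  have := (finite_range_pattern Q r H).to_subtype
  choose n hn using fun σ : Set.range (pattern Q r (H := H)) =>
    exists_pattern_eq_mem_sBall hgen hsym hZ hH r (Set.rangeSplitting _ σ)
  obtain ⟨t, ht⟩ := (Set.finite_range n).bddAbove
  refine ⟨t, fun p q => ?_⟩
  obtain ⟨z, hz, hzq⟩ := hn ⟨_, q, rfl⟩ p
  exact ⟨z, sBall_mono (ht ⟨_, rfl⟩) p hz, hzq.trans (Set.apply_rangeSplitting _ _)⟩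

end Schreier

theorem ball_type_equivalence_finitely_many_classes_general
    {Γ : Type*} [Group Γ] (Q : Finset Γ)
    (hgen : Subgroup.closure (Q : Set Γ) = ⊤)
    (hsym : ∀ s ∈ Q, s⁻¹ ∈ Q)
    (Z : Set (Subgroup Γ)) (hZ : IsURS Z)
    (H : Subgroup Γ) (hH : H ∈ Z) (r : ℕ) :
    Equivalence (fun p q : Γ ⧸ H => BallIso Q H H r p q) ∧
    {C : Set (Γ ⧸ H) | ∃ p : Γ ⧸ H, C = {q : Γ ⧸ H | BallIso Q H H r p q}}.Finite ∧
    ∃ t : ℕ, 0 < t ∧ ∀ p q : Γ ⧸ H, ∃ z ∈ sBall Q H t p, BallIso Q H H r q z := by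
  obtain ⟨t, ht⟩ := Schreier.exists_forall_exists_pattern_eq_mem_sBall hgen hsym hZ hH r
  refine ⟨⟨Schreier.ballIso_refl, Schreier.ballIso_symm, Schreier.ballIso_trans⟩,
    Schreier.finite_ballIso_classes hsym H r, t + 1, t.succ_pos, fun p q => ?_⟩
  obtain ⟨z, hz, hzq⟩ := ht p q
  exact ⟨z, Schreier.sBall_mono t.le_succ p hz, Schreier.ballIso_of_pattern_eq hsym hzq.symm⟩

/-- for `H` in a URS `Z` and `r ≥ 1`, the relation `p ≡_r q` ("the
rooted-labeled `r`-balls around `p` and `q` are isomorphic") is an equivalence relation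
on `Γ/H` with finitely many classes, and there is `t_r > 0` such that every `t_r`-ball
in `Γ/H` meets every equivalence class. -/
theorem ball_type_equivalence_finitely_many_classes
    {Γ : Type*} [Group Γ] (Q : Finset Γ)
    (hgen : Subgroup.closure (Q : Set Γ) = ⊤)
    (hsym : ∀ s ∈ Q, s⁻¹ ∈ Q)
    (Z : Set (Subgroup Γ)) (hZ : IsURS Z)
    (H : Subgroup Γ) (hH : H ∈ Z) (r : ℕ) (hr : 1 ≤ r) :
    Equivalence (fun p q : Γ ⧸ H => BallIso Q H H r p q) ∧
    {C : Set (Γ ⧸ H) | ∃ p : Γ ⧸ H, C = {q : Γ ⧸ H | BallIso Q H H r p q}}.Finite ∧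
    ∃ t : ℕ, 0 < t ∧ ∀ p q : Γ ⧸ H, ∃ z ∈ sBall Q H t p, BallIso Q H H r q z :=
  ball_type_equivalence_finitely_many_classes_general Q hgen hsym Z hZ H hH r
end
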